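/- Fix l ∈ {1,...,K} and define ℬ^l_π(i) = { S ⊆ 𝒦 \ {π(1),...,π(i)} : π(i+1) ∈ S and |S| = l }. Then the sets ℬ^l_π(0), ..., ℬ^l_π(|T|-1) are pairwise disjoint and their union equals { S ⊆ 𝒦 : S ∩ T ≠ ∅ and |S| = l }. -/

import Mathlib

/-! A set `S` lies in `ℬ^l_π(i)` exactly when `π i` is the first element of `S` in the order
in which `π` enumerates `T`. Every `S` meeting `T` has such a first index, by well-foundedness,
and it is unique, since two first indices can not lie strictly below one another. -/

section FirstIndex

variable {ι : Type*} [LinearOrder ι] {p : ι → Prop}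

theorem eq_of_first_index {i j : ι} (hi : p i) (hi_first : ∀ m < i, ¬p m)
    (hj : p j) (hj_first : ∀ m < j, ¬p m) : i = j :=
  le_antisymm (not_lt.1 fun hji => hi_first j hji hj) (not_lt.1 fun hij => hj_first i hij hi)

theorem exists_first_index [WellFoundedLT ι] (h : ∃ i, p i) :
    ∃ i, p i ∧ ∀ m < i, ¬p m := by
  obtain ⟨i, hi, hmin⟩ := wellFounded_lt.has_min {i | p i} h
  exact ⟨i, hi, fun m hmi hm => hmin m hm hmi⟩

end FirstIndex

theorem Bl_disjoint_union_general (K : ℕ) (l : ℕ)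
    (T : Finset (Fin K))
    (π : Fin T.card → Fin K)
    (himg : Finset.image π Finset.univ = T) :
    (∀ i j : Fin T.card, i ≠ j →
      Disjoint
        ((Finset.univ : Finset (Fin K)).powerset.filter
          (fun S => (π i ∈ S ∧ ∀ m, m < i → π m ∉ S) ∧ S.card = l))
        ((Finset.univ : Finset (Fin K)).powerset.filter
          (fun S => (π j ∈ S ∧ ∀ m, m < j → π m ∉ S) ∧ S.card = l))) ∧
    (Finset.univ.biUnion (fun i : Fin T.card =>
        (Finset.univ : Finset (Fin K)).powerset.filter
          (fun S => (π i ∈ S ∧ ∀ m, m < i → π m ∉ S) ∧ S.card = l)))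
      = (Finset.univ : Finset (Fin K)).powerset.filter
          (fun S => (S ∩ T).Nonempty ∧ S.card = l) := by
  refine ⟨fun i j hij => Finset.disjoint_filter.2 fun S _ ⟨⟨hi, hi_first⟩, _⟩ ⟨⟨hj, hj_first⟩, _⟩ =>
    hij (eq_of_first_index hi hi_first hj hj_first), ?_⟩
  ext S
  have hmeets : (S ∩ T).Nonempty ↔ ∃ i, π i ∈ S := by
    simp [Finset.Nonempty, ← himg, and_comm]
  simp only [Finset.mem_biUnion, Finset.powerset_univ, Finset.mem_filter, Finset.mem_univ,
    true_and, hmeets]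
  constructor
  · rintro ⟨i, ⟨hi, -⟩, hcard⟩
    exact ⟨⟨i, hi⟩, hcard⟩
  · rintro ⟨hS, hcard⟩
    obtain ⟨i, hi⟩ := exists_first_index hS
    exact ⟨i, hi, hcard⟩

theorem Bl_disjoint_union (K : ℕ) (hK : 0 < K) (l : ℕ) (hl1 : 1 ≤ l) (hlK : l ≤ K)
    (T : Finset (Fin K)) (hT : T.Nonempty)
    (π : Fin T.card → Fin K) (hinj : Function.Injective π)
    (himg : Finset.image π Finset.univ = T) :
    (∀ i j : Fin T.card, i ≠ j →
      Disjoint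
        ((Finset.univ : Finset (Fin K)).powerset.filter
          (fun S => (π i ∈ S ∧ ∀ m, m < i → π m ∉ S) ∧ S.card = l))
        ((Finset.univ : Finset (Fin K)).powerset.filter
          (fun S => (π j ∈ S ∧ ∀ m, m < j → π m ∉ S) ∧ S.card = l))) ∧
    (Finset.univ.biUnion (fun i : Fin T.card =>
        (Finset.univ : Finset (Fin K)).powerset.filter
          (fun S => (π i ∈ S ∧ ∀ m, m < i → π m ∉ S) ∧ S.card = l)))
      = (Finset.univ : Finset (Fin K)).powerset.filter
          (fun S => (S ∩ T).Nonempty ∧ S.card = l) :=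
  Bl_disjoint_union_general K l T π himg
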